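/- Let C : [0,1]² → [0,1] be a bivariate copula whose first-order partial derivatives C_u = ∂C/∂u and C_v = ∂C/∂v exist and are bounded on (0,1)². Let φ : [0,1] → [0,1] be an increasing differentiable bijection with bounded derivative φ'. Let k : ℝ² → ℝ be a bounded nonnegative function supported on [-1,1]² with ∫∫_{[-1,1]²} k(s,t) ds dt = 1, and let K(x,y) = ∫_{-∞}^{x} ∫_{-∞}^{y} k(s,t) ds dt (so K takes values in [0,1]). Let (U,V) be a random vector on [0,1]² whose joint distribution function is C. Then there exists a constant C₀ > 0, depending only on ‖C_u‖, ‖C_v‖, ‖φ'‖ and ‖k‖, such that for all u, v ∈ (0,1) and all h ∈ (0,1) such that φ⁻¹(u) − sh ∈ [0,1] and φ⁻¹(v) − th ∈ [0,1] for all (s,t) ∈ [-1,1]², E[ ( K( (φ⁻¹(u) − φ⁻¹(U))/h , (φ⁻¹(v) − φ⁻¹(V))/h ) − 1{U ≤ u, V ≤ v} )² ] ≤ C₀ h. -/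

import Mathlib

open MeasureTheory Set

noncomputable section

/-! Since `k` is supported in `[-1,1]²`, the smoothed indicator
`K((φ⁻¹u - φ⁻¹U)/h, (φ⁻¹v - φ⁻¹V)/h)` equals `1{U ≤ u, V ≤ v}` unless `U` lies in
`φ([φ⁻¹u - h, φ⁻¹u + h])` or `V` lies in `φ([φ⁻¹v - h, φ⁻¹v + h])`. On that event the integrand
is at most `(4‖k‖ + 1)²`, and because a copula has uniform margins the event has probability at
most the total length of the two intervals, which is `≤ 4‖φ'‖h` by the mean value theorem. -/

theorem norm_setIntegral_le_of_eq_zero_of_notMem_Icc {E : Type*} [NormedAddCommGroup E]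
    [NormedSpace ℝ E] {f : ℝ → E} {a b M : ℝ} (hab : a ≤ b) (hf : ∀ t ∉ Icc a b, f t = 0)
    (hM : ∀ t, ‖f t‖ ≤ M) {s : Set ℝ} (hs : MeasurableSet s) :
    ‖∫ t in s, f t‖ ≤ M * (b - a) := by
  have hM0 : 0 ≤ M := (norm_nonneg _).trans (hM a)
  rw [setIntegral_eq_of_subset_of_forall_sdiff_eq_zero hs inter_subset_left
    fun t ht => hf t fun h => ht.2 ⟨ht.1, h⟩]
  calc ‖∫ t in s ∩ Icc a b, f t‖ ≤ M * volume.real (s ∩ Icc a b) :=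
        norm_setIntegral_le_of_norm_le_const
          ((measure_mono inter_subset_right).trans_lt measure_Icc_lt_top) fun t _ => hM t
    _ ≤ M * volume.real (Icc a b) :=
        mul_le_mul_of_nonneg_left (measureReal_mono inter_subset_right measure_Icc_lt_top.ne) hM0
    _ = M * (b - a) := by rw [Real.volume_real_Icc_of_le hab]

theorem strictMonoOn_of_rightInvOn_of_mapsTo {α β : Type*} [LinearOrder α] [LinearOrder β]
    {φ : β → α} {ψ : α → β} {s : Set α} {t : Set β} (hφ : StrictMonoOn φ t)
    (hinv : RightInvOn ψ φ s) (hψ : MapsTo ψ s t) : StrictMonoOn ψ s :=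
  fun x hx y hy hxy => (hφ.lt_iff_lt (hψ hx) (hψ hy)).1 (by rwa [hinv.eq hx, hinv.eq hy])

theorem sq_sub_ite_le {x M : ℝ} (hx : |x| ≤ M) (p : Prop) [Decidable p] :
    (x - if p then 1 else 0) ^ 2 ≤ (M + 1) ^ 2 := by
  have := abs_le.1 hx
  split_ifs <;> nlinarith

def kernelCDF (k : ℝ → ℝ → ℝ) (x y : ℝ) : ℝ := ∫ s in Iic x, ∫ t in Iic y, k s t

section kernelCDF

variable {k : ℝ → ℝ → ℝ}
  (hk : ∀ s t : ℝ, (s, t) ∉ Icc (-1:ℝ) 1 ×ˢ Icc (-1:ℝ) 1 → k s t = 0)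
include hk

theorem abs_kernelCDF_le {M : ℝ} (hM : ∀ s t, |k s t| ≤ M) (x y : ℝ) :
    |kernelCDF k x y| ≤ 4 * M := by
  have hinner : ∀ s, |∫ t in Iic y, k s t| ≤ M * (1 - -1) := fun s =>
    norm_setIntegral_le_of_eq_zero_of_notMem_Icc (by norm_num)
      (fun t ht => hk s t fun h => ht h.2) (hM s) measurableSet_Iic
  calc |kernelCDF k x y| ≤ M * (1 - -1) * (1 - -1) :=
        norm_setIntegral_le_of_eq_zero_of_notMem_Icc (by norm_num)
          (fun s hs => setIntegral_eq_zero_of_forall_eq_zero fun t _ => hk s t fun h => hs h.1)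
          hinner measurableSet_Iic
    _ = 4 * M := by ring

theorem kernelCDF_eq_zero_of_lt_left {x : ℝ} (hx : x < -1) (y : ℝ) : kernelCDF k x y = 0 :=
  setIntegral_eq_zero_of_forall_eq_zero fun s hs =>
    setIntegral_eq_zero_of_forall_eq_zero fun t _ =>
      hk s t fun h => lt_irrefl _ ((h.1.1.trans hs).trans_lt hx)

theorem kernelCDF_eq_zero_of_lt_right (x : ℝ) {y : ℝ} (hy : y < -1) : kernelCDF k x y = 0 :=
  setIntegral_eq_zero_of_forall_eq_zero fun s _ =>
    setIntegral_eq_zero_of_forall_eq_zero fun t ht =>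
      hk s t fun h => lt_irrefl _ ((h.2.1.trans ht).trans_lt hy)

theorem kernelCDF_eq_one (hkint : (∫ s in Icc (-1:ℝ) 1, ∫ t in Icc (-1:ℝ) 1, k s t) = 1)
    {x y : ℝ} (hx : 1 ≤ x) (hy : 1 ≤ y) : kernelCDF k x y = 1 := by
  have hinner : ∀ s, ∫ t in Iic y, k s t = ∫ t in Icc (-1:ℝ) 1, k s t := fun s =>
    setIntegral_eq_of_subset_of_forall_sdiff_eq_zero measurableSet_Iic
      (Icc_subset_Iic_self.trans (Iic_subset_Iic.2 hy)) fun t ht => hk s t fun h => ht.2 h.2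
  rw [kernelCDF, funext hinner]
  exact (setIntegral_eq_of_subset_of_forall_sdiff_eq_zero measurableSet_Iic
    (Icc_subset_Iic_self.trans (Iic_subset_Iic.2 hx)) fun s hs =>
      setIntegral_eq_zero_of_forall_eq_zero fun t _ => hk s t fun h => hs.2 h.1).trans hkint

theorem kernelCDF_eq_ite (hkint : (∫ s in Icc (-1:ℝ) 1, ∫ t in Icc (-1:ℝ) 1, k s t) = 1)
    {x y : ℝ} {p q : Prop} [Decidable (p ∧ q)] (hx : (1 ≤ x ∧ p) ∨ (x < -1 ∧ ¬p))
    (hy : (1 ≤ y ∧ q) ∨ (y < -1 ∧ ¬q)) : kernelCDF k x y = if p ∧ q then 1 else 0 := by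
  rcases hx with ⟨hx, hp⟩ | ⟨hx, hp⟩
  · rcases hy with ⟨hy, hq⟩ | ⟨hy, hq⟩
    · rw [if_pos ⟨hp, hq⟩, kernelCDF_eq_one hk hkint hx hy]
    · rw [if_neg fun h => hq h.2, kernelCDF_eq_zero_of_lt_right hk x hy]
  · rw [if_neg fun h => hp h.1, kernelCDF_eq_zero_of_lt_left hk hx y]

end kernelCDF

section uniformCDF

variable {Ω : Type*} [MeasurableSpace Ω] {P : Measure Ω}

theorem measureReal_preimage_Iic_of_copula [IsProbabilityMeasure P] {U V : Ω → ℝ}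
    (hU : Measurable U) (hV : Measurable V) {Cop : ℝ → ℝ → ℝ}
    (hmarg : ∀ u ∈ Icc (0:ℝ) 1, Cop u 1 = u ∧ Cop 1 u = u)
    (hUV : ∀ u ∈ Icc (0:ℝ) 1, ∀ v ∈ Icc (0:ℝ) 1,
      (P {ω | U ω ≤ u ∧ V ω ≤ v}).toReal = Cop u v) :
    (∀ x ∈ Icc (0:ℝ) 1, P.real (U ⁻¹' Iic x) = x) ∧
      ∀ x ∈ Icc (0:ℝ) 1, P.real (V ⁻¹' Iic x) = x := by
  have h1 : (1:ℝ) ∈ Icc (0:ℝ) 1 := right_mem_Icc.2 zero_le_one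
  have h11 : P (U ⁻¹' Iic 1 ∩ V ⁻¹' Iic 1) = 1 := by
    rw [← ENNReal.toReal_eq_one_iff]
    exact (hUV 1 h1 1 h1).trans (hmarg 1 h1).1
  have hconull : ∀ {W : Ω → ℝ}, Measurable W → U ⁻¹' Iic 1 ∩ V ⁻¹' Iic 1 ⊆ W ⁻¹' Iic 1 →
      P (W ⁻¹' Iic 1)ᶜ = 0 := fun hW hsub =>
    (prob_compl_eq_zero_iff (hW measurableSet_Iic)).2
      (le_antisymm prob_le_one (h11 ▸ measure_mono hsub))
  refine ⟨fun x hx => ?_, fun x hx => ?_⟩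
  · rw [measureReal_def, ← measure_inter_conull (hconull hV inter_subset_right)]
    exact (hUV x hx 1 h1).trans (hmarg x hx).1
  · rw [measureReal_def, ← measure_inter_conull (hconull hU inter_subset_left), inter_comm]
    exact (hUV 1 h1 x hx).trans (hmarg x hx).2

variable {W : Ω → ℝ} (hW : Measurable W) (hF : ∀ x ∈ Icc (0:ℝ) 1, P.real (W ⁻¹' Iic x) = x)
include hW hF

theorem ae_mem_Icc_of_measureReal_preimage_Iic [IsProbabilityMeasure P] :
    ∀ᵐ ω ∂P, W ω ∈ Icc (0:ℝ) 1 := by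
  have hIoc : P.real (W ⁻¹' Ioc 0 1) = 1 := by
    rw [← Iic_sdiff_Iic, preimage_sdiff, measureReal_sdiff (preimage_mono (Iic_subset_Iic.2
      zero_le_one)) (hW measurableSet_Iic), hF 1 (right_mem_Icc.2 zero_le_one),
      hF 0 (left_mem_Icc.2 zero_le_one), sub_zero]
  have : P (W ⁻¹' Ioc 0 1) = 1 := by rwa [measureReal_def, ENNReal.toReal_eq_one_iff] at hIoc
  exact Filter.mem_of_superset ((mem_ae_iff_prob_eq_one (hW measurableSet_Ioc)).2 this)
    (preimage_mono Ioc_subset_Icc_self)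

theorem measureReal_preimage_Icc_le [IsFiniteMeasure P] {a b : ℝ} (ha : 0 ≤ a) (hab : a ≤ b)
    (hb : b ≤ 1) : P.real (W ⁻¹' Icc a b) ≤ b - a := by
  have hb' : b ∈ Icc (0:ℝ) 1 := ⟨ha.trans hab, hb⟩
  rcases ha.eq_or_lt with rfl | ha
  · calc P.real (W ⁻¹' Icc 0 b) ≤ P.real (W ⁻¹' Iic b) :=
          measureReal_mono (preimage_mono Icc_subset_Iic_self)
      _ = b - 0 := by rw [hF b hb', sub_zero]
  refine le_of_forall_pos_le_add fun ε hε => ?_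
  set c := a - min ε a
  have hca : c < a := sub_lt_self a (lt_min hε ha)
  have hc : c ∈ Icc (0:ℝ) 1 := ⟨sub_nonneg.2 (min_le_right ε a), by linarith⟩
  calc P.real (W ⁻¹' Icc a b) ≤ P.real (W ⁻¹' Iic b \ W ⁻¹' Iic c) :=
        measureReal_mono fun ω hω => ⟨hω.2, fun h => (h.trans_lt hca).not_ge hω.1⟩
    _ = b - c := by
        rw [measureReal_sdiff (preimage_mono (Iic_subset_Iic.2 (hca.le.trans hab)))
          (hW measurableSet_Iic), hF b hb', hF c hc]
    _ ≤ b - a + ε := by linarith [min_le_left ε a]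

end uniformCDF

def window (φ : ℝ → ℝ) (c h : ℝ) : Set ℝ := Icc (φ (c - h)) (φ (c + h))

section window

variable {φ : ℝ → ℝ} (hφ : MapsTo φ (Icc 0 1) (Icc 0 1)) {h : ℝ}
include hφ

theorem measureReal_preimage_window_le {Ω : Type*} [MeasurableSpace Ω] {P : Measure Ω}
    [IsFiniteMeasure P] {W : Ω → ℝ} (hW : Measurable W)
    (hF : ∀ x ∈ Icc (0:ℝ) 1, P.real (W ⁻¹' Iic x) = x) (hφm : MonotoneOn φ (Icc 0 1))
    {φ' : ℝ → ℝ} (hφd : ∀ x ∈ Icc (0:ℝ) 1, HasDerivWithinAt φ (φ' x) (Icc 0 1) x) {M : ℝ}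
    (hM : ∀ x ∈ Icc (0:ℝ) 1, |φ' x| ≤ M) {c : ℝ} (hh : 0 ≤ h) (hlo : c - h ∈ Icc (0:ℝ) 1)
    (hhi : c + h ∈ Icc (0:ℝ) 1) : P.real (W ⁻¹' window φ c h) ≤ 2 * M * h := by
  have hlip : φ (c + h) - φ (c - h) ≤ M * |c + h - (c - h)| :=
    (le_abs_self _).trans ((convex_Icc 0 1).norm_image_sub_le_of_norm_hasDerivWithin_le
      hφd hM hlo hhi)
  rw [add_sub_sub_cancel, ← two_mul, abs_of_nonneg (by positivity)] at hlip
  calc P.real (W ⁻¹' window φ c h) ≤ φ (c + h) - φ (c - h) :=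
        measureReal_preimage_Icc_le hW hF (hφ hlo).1 (hφm hlo hhi (by linarith)) (hφ hhi).2
    _ ≤ 2 * M * h := by linarith

theorem notMem_window_cases {ψ : ℝ → ℝ} (hψm : StrictMonoOn ψ (Icc 0 1))
    (hψ : LeftInvOn ψ φ (Icc 0 1)) {u X : ℝ} (hu : u ∈ Icc (0:ℝ) 1) (hX : X ∈ Icc (0:ℝ) 1)
    (hh : 0 < h) (hlo : ψ u - h ∈ Icc (0:ℝ) 1) (hhi : ψ u + h ∈ Icc (0:ℝ) 1)
    (hXw : X ∉ window φ (ψ u) h) :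
    (1 ≤ (ψ u - ψ X) / h ∧ X ≤ u) ∨ ((ψ u - ψ X) / h < -1 ∧ ¬X ≤ u) := by
  simp only [window, mem_Icc, not_and_or, not_le] at hXw
  rw [one_le_div hh, div_lt_iff₀ hh, ← hψm.le_iff_le hX hu]
  rcases hXw with hXa | hXb
  · have := (hψm.lt_iff_lt hX (hφ hlo)).2 hXa
    rw [hψ hlo] at this
    exact Or.inl ⟨by linarith, by linarith⟩
  · have := (hψm.lt_iff_lt (hφ hhi) hX).2 hXb
    rw [hψ hhi] at this
    exact Or.inr ⟨by linarith, not_le.2 (by linarith)⟩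

end window

theorem second_moment_bound_general
    {Ω : Type} [MeasurableSpace Ω] (P : Measure Ω) [IsProbabilityMeasure P]
    -- the copula `C`
    (Cop : ℝ → ℝ → ℝ)
    (hmarg : ∀ u ∈ Icc (0:ℝ) 1, Cop u 1 = u ∧ Cop 1 u = u)
    -- the increasing differentiable bijection `φ` with inverse `ψ = φ⁻¹` and bounded
    -- derivative `φ'`
    (φ ψ φ' : ℝ → ℝ) (hφm : StrictMonoOn φ (Icc (0:ℝ) 1))
    (hφbij : BijOn φ (Icc (0:ℝ) 1) (Icc (0:ℝ) 1))
    (hψ : InvOn ψ φ (Icc (0:ℝ) 1) (Icc (0:ℝ) 1))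
    (hφd : ∀ x ∈ Icc (0:ℝ) 1, HasDerivWithinAt φ (φ' x) (Icc (0:ℝ) 1) x)
    (Mφ : ℝ) (hMφ : ∀ x ∈ Icc (0:ℝ) 1, |φ' x| ≤ Mφ)
    -- the kernel `k`, nonnegative, bounded, supported on `[-1,1]²` and of integral 1,
    -- with `K(x,y) = ∫_{-∞}^x ∫_{-∞}^y k(s,t) ds dt`
    (k : ℝ → ℝ → ℝ) (Mk : ℝ) (hMk : ∀ s t : ℝ, |k s t| ≤ Mk)
    (hksupp : ∀ s t : ℝ, (s, t) ∉ Icc (-1:ℝ) 1 ×ˢ Icc (-1:ℝ) 1 → k s t = 0)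
    (hkint : (∫ s in Icc (-1:ℝ) 1, ∫ t in Icc (-1:ℝ) 1, k s t) = 1)
    (K : ℝ → ℝ → ℝ) (hK : ∀ x y, K x y = ∫ s in Iic x, ∫ t in Iic y, k s t)
    -- the random vector `(U,V)` with joint distribution function `C`
    (U V : Ω → ℝ) (hUm : Measurable U) (hVm : Measurable V)
    (hUV : ∀ u ∈ Icc (0:ℝ) 1, ∀ v ∈ Icc (0:ℝ) 1,
      (P {ω | U ω ≤ u ∧ V ω ≤ v}).toReal = Cop u v) :
    ∃ C₀ : ℝ, 0 < C₀ ∧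
      ∀ u ∈ Ioo (0:ℝ) 1, ∀ v ∈ Ioo (0:ℝ) 1, ∀ h ∈ Ioo (0:ℝ) 1,
        (∀ s ∈ Icc (-1:ℝ) 1, ψ u - s * h ∈ Icc (0:ℝ) 1 ∧ ψ v - s * h ∈ Icc (0:ℝ) 1) →
        (∫ ω, (K ((ψ u - ψ (U ω)) / h) ((ψ v - ψ (V ω)) / h) -
            (if U ω ≤ u ∧ V ω ≤ v then (1:ℝ) else 0)) ^ 2 ∂P) ≤ C₀ * h := by
  obtain rfl : K = kernelCDF k := funext₂ hK
  obtain ⟨hFU, hFV⟩ := measureReal_preimage_Iic_of_copula hUm hVm hmarg hUV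
  have hψm : StrictMonoOn ψ (Icc 0 1) :=
    strictMonoOn_of_rightInvOn_of_mapsTo hφm hψ.2 (hφbij.symm hψ.symm).mapsTo
  have hMφ0 : 0 ≤ Mφ := (abs_nonneg _).trans (hMφ 0 (left_mem_Icc.2 zero_le_one))
  refine ⟨(4 * Mk + 1) ^ 2 * (4 * Mφ) + 1, by positivity, fun u hu v hv h hh hwin => ?_⟩
  obtain ⟨hu₁, hv₁⟩ : ψ u - h ∈ Icc (0:ℝ) 1 ∧ ψ v - h ∈ Icc (0:ℝ) 1 := by
    simpa using hwin 1 (by norm_num)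
  obtain ⟨hu₂, hv₂⟩ : ψ u + h ∈ Icc (0:ℝ) 1 ∧ ψ v + h ∈ Icc (0:ℝ) 1 := by
    simpa using hwin (-1) (by norm_num)
  set A := U ⁻¹' window φ (ψ u) h ∪ V ⁻¹' window φ (ψ v) h
  have hA : MeasurableSet A := (hUm measurableSet_Icc).union (hVm measurableSet_Icc)
  have hPA : P.real A ≤ 4 * Mφ * h := by
    linarith [measureReal_union_le (μ := P) (U ⁻¹' window φ (ψ u) h) (V ⁻¹' window φ (ψ v) h),
      measureReal_preimage_window_le hφbij.mapsTo hUm hFU hφm.monotoneOn hφd hMφ hh.1.le hu₁ hu₂,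
      measureReal_preimage_window_le hφbij.mapsTo hVm hFV hφm.monotoneOn hφd hMφ hh.1.le hv₁ hv₂]
  have hbound : (fun ω => (kernelCDF k ((ψ u - ψ (U ω)) / h) ((ψ v - ψ (V ω)) / h) -
      (if U ω ≤ u ∧ V ω ≤ v then (1:ℝ) else 0)) ^ 2)
      ≤ᵐ[P] A.indicator fun _ => (4 * Mk + 1) ^ 2 := by
    filter_upwards [ae_mem_Icc_of_measureReal_preimage_Iic hUm hFU,
      ae_mem_Icc_of_measureReal_preimage_Iic hVm hFV] with ω hUω hVω
    by_cases hω : ω ∈ A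
    · rw [indicator_of_mem hω]
      exact sq_sub_ite_le (abs_kernelCDF_le hksupp hMk _ _) _
    · rw [indicator_of_notMem hω, kernelCDF_eq_ite hksupp hkint
        (notMem_window_cases hφbij.mapsTo hψm hψ.1 ⟨hu.1.le, hu.2.le⟩ hUω hh.1 hu₁ hu₂
          fun h' => hω (Or.inl h'))
        (notMem_window_cases hφbij.mapsTo hψm hψ.1 ⟨hv.1.le, hv.2.le⟩ hVω hh.1 hv₁ hv₂
          fun h' => hω (Or.inr h'))]
      simp
  calc _ ≤ ∫ ω, A.indicator (fun _ => (4 * Mk + 1) ^ 2) ω ∂P :=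
        integral_mono_of_nonneg (ae_of_all _ fun _ => sq_nonneg _)
          ((integrable_const _).indicator hA) hbound
    _ = P.real A * (4 * Mk + 1) ^ 2 := integral_indicator_const _ hA
    _ ≤ ((4 * Mk + 1) ^ 2 * (4 * Mφ) + 1) * h := by nlinarith [hh.1, sq_nonneg (4 * Mk + 1)]

/-- The second-moment bound (condition (G.ii)):
`E[(K((φ⁻¹(u) - φ⁻¹(U))/h, (φ⁻¹(v) - φ⁻¹(V))/h) - 1{U ≤ u, V ≤ v})²] ≤ C₀ h`. -/
theorem second_moment_bound
    {Ω : Type} [MeasurableSpace Ω] (P : Measure Ω) [IsProbabilityMeasure P]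
    -- the copula `C`
    (Cop : ℝ → ℝ → ℝ)
    (hground : ∀ u ∈ Icc (0:ℝ) 1, Cop u 0 = 0 ∧ Cop 0 u = 0)
    (hmarg : ∀ u ∈ Icc (0:ℝ) 1, Cop u 1 = u ∧ Cop 1 u = u)
    (h2inc : ∀ u₁ u₂ v₁ v₂ : ℝ, u₁ ∈ Icc (0:ℝ) 1 → u₂ ∈ Icc (0:ℝ) 1 → v₁ ∈ Icc (0:ℝ) 1 →
      v₂ ∈ Icc (0:ℝ) 1 → u₁ ≤ u₂ → v₁ ≤ v₂ →
      0 ≤ Cop u₂ v₂ - Cop u₁ v₂ - Cop u₂ v₁ + Cop u₁ v₁)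
    -- bounded first-order partial derivatives of `C` on `(0,1)²`
    (Cu Cv : ℝ → ℝ → ℝ) (Mu Mv : ℝ)
    (hCu : ∀ u ∈ Ioo (0:ℝ) 1, ∀ v ∈ Ioo (0:ℝ) 1, HasDerivAt (fun u' => Cop u' v) (Cu u v) u)
    (hCv : ∀ u ∈ Ioo (0:ℝ) 1, ∀ v ∈ Ioo (0:ℝ) 1, HasDerivAt (fun v' => Cop u v') (Cv u v) v)
    (hMu : ∀ u ∈ Ioo (0:ℝ) 1, ∀ v ∈ Ioo (0:ℝ) 1, |Cu u v| ≤ Mu)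
    (hMv : ∀ u ∈ Ioo (0:ℝ) 1, ∀ v ∈ Ioo (0:ℝ) 1, |Cv u v| ≤ Mv)
    -- the increasing differentiable bijection `φ` with inverse `ψ = φ⁻¹` and bounded
    -- derivative `φ'`
    (φ ψ φ' : ℝ → ℝ) (hφm : StrictMonoOn φ (Icc (0:ℝ) 1))
    (hφbij : BijOn φ (Icc (0:ℝ) 1) (Icc (0:ℝ) 1))
    (hψ : InvOn ψ φ (Icc (0:ℝ) 1) (Icc (0:ℝ) 1))
    (hφd : ∀ x ∈ Icc (0:ℝ) 1, HasDerivWithinAt φ (φ' x) (Icc (0:ℝ) 1) x)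
    (Mφ : ℝ) (hMφ : ∀ x ∈ Icc (0:ℝ) 1, |φ' x| ≤ Mφ)
    -- the kernel `k`, nonnegative, bounded, supported on `[-1,1]²` and of integral 1,
    -- with `K(x,y) = ∫_{-∞}^x ∫_{-∞}^y k(s,t) ds dt`
    (k : ℝ → ℝ → ℝ) (hkpos : ∀ s t : ℝ, 0 ≤ k s t) (Mk : ℝ) (hMk : ∀ s t : ℝ, |k s t| ≤ Mk)
    (hksupp : ∀ s t : ℝ, (s, t) ∉ Icc (-1:ℝ) 1 ×ˢ Icc (-1:ℝ) 1 → k s t = 0)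
    (hkint : (∫ s in Icc (-1:ℝ) 1, ∫ t in Icc (-1:ℝ) 1, k s t) = 1)
    (K : ℝ → ℝ → ℝ) (hK : ∀ x y, K x y = ∫ s in Iic x, ∫ t in Iic y, k s t)
    -- the random vector `(U,V)` with joint distribution function `C`
    (U V : Ω → ℝ) (hUm : Measurable U) (hVm : Measurable V)
    (hUV : ∀ u ∈ Icc (0:ℝ) 1, ∀ v ∈ Icc (0:ℝ) 1,
      (P {ω | U ω ≤ u ∧ V ω ≤ v}).toReal = Cop u v) :
    ∃ C₀ : ℝ, 0 < C₀ ∧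
      ∀ u ∈ Ioo (0:ℝ) 1, ∀ v ∈ Ioo (0:ℝ) 1, ∀ h ∈ Ioo (0:ℝ) 1,
        (∀ s ∈ Icc (-1:ℝ) 1, ψ u - s * h ∈ Icc (0:ℝ) 1 ∧ ψ v - s * h ∈ Icc (0:ℝ) 1) →
        (∫ ω, (K ((ψ u - ψ (U ω)) / h) ((ψ v - ψ (V ω)) / h) -
            (if U ω ≤ u ∧ V ω ≤ v then (1:ℝ) else 0)) ^ 2 ∂P) ≤ C₀ * h :=
  second_moment_bound_general P Cop hmarg φ ψ φ' hφm hφbij hψ hφd Mφ hMφ k Mk hMk hksupp hkint K hK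
    U V hUm hVm hUV
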